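/- Let α, α₁, α₂ ∈ ℝ with α₁ ≠ 0 and α₂ ≠ 0, and let (a_n)_{n≥0}, (b_n)_{n≥0} be real sequences with a_n ≠ 0 and b_n ≠ 0 for all n, satisfying for all n ≥ 1: α a_n + α₁ a_n(a_{n−1} − a_{n+1} + b_n − b_{n−1}) + α₂ a_n(1/b_n − 1/b_{n−1}) = 0 and α b_n + α₁ b_n(a_n − a_{n+1}) + α₂(a_{n+1}/b_{n+1} − a_n/b_{n−1}) = 0. Then there exist real constants A₀ and B₀ such that for all n ≥ 0: α₁(b_n − a_{n+1} − a_n) + α₂/b_n + nα + A₀ = 0 and α₁ a_{n+1} − α₂ a_{n+1}/(b_n b_{n+1}) − nα − B₀ = 0; moreover, if α₁ b_n b_{n+1} − α₂ ≠ 0 for all n ≥ 0, then a_{n+1} = (nα + B₀) b_n b_{n+1}/(α₁ b_n b_{n+1} − α₂) and the sequence (b_n) alone satisfies, for all n ≥ 1, the second-order difference equation α₁( b_n − (nα + B₀) b_n b_{n+1}/(α₁ b_n b_{n+1} − α₂) − ((n−1)α + B₀) b_{n−1} b_n/(α₁ b_{n−1} b_n − α₂) ) + α₂/b_n + nα + A₀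 = 0. -/

import Mathlib

/-!
Divided by `a (n + 1)` and `b (n + 1)` respectively, the lattice equations at `n + 1` become
exact differences `F (n + 1) = F n` and `G (n + 1) = G n` of the first integrals
`F = firstIntegralA` and `G = firstIntegralB`; hence `A₀ := -F 0` and `B₀ := G 0`. The relation
`G n = B₀` is linear in `a (n + 1)`; solving it and substituting into `F n = -A₀` eliminates `a`.
-/

theorem eq_apply_zero_of_apply_succ_eq {α : Type*} {f : ℕ → α} (h : ∀ n, f (n + 1) = f n) :
    ∀ n, f n = f 0
  | 0 => rfl
  | n + 1 => (h n).trans (eq_apply_zero_of_apply_succ_eq h n)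

theorem eq_div_of_mul_sub_div_eq {K : Type*} [Field K] {α₁ α₂ x p c : K} (hp : p ≠ 0)
    (hden : α₁ * p - α₂ ≠ 0) (h : α₁ * x - α₂ * x / p = c) : x = c * p / (α₁ * p - α₂) := by
  rw [eq_div_iff hden, ← h]
  field_simp

namespace StationaryRToda

variable {K : Type*} [Field K] (α α₁ α₂ : K) (a b : ℕ → K)

def firstIntegralA (n : ℕ) : K :=
  α₁ * (b n - a (n + 1) - a n) + α₂ / b n + n * α

def firstIntegralB (n : ℕ) : K :=
  α₁ * a (n + 1) - α₂ * a (n + 1) / (b n * b (n + 1)) - n * α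

variable {α α₁ α₂ a b}

theorem firstIntegralA_succ (ha : ∀ n, a n ≠ 0)
    (h1 : ∀ n : ℕ, 1 ≤ n →
      α * a n + α₁ * a n * (a (n - 1) - a (n + 1) + b n - b (n - 1))
        + α₂ * a n * (1 / b n - 1 / b (n - 1)) = 0)
    (n : ℕ) : firstIntegralA α α₁ α₂ a b (n + 1) = firstIntegralA α α₁ α₂ a b n := by
  have h := h1 (n + 1) n.succ_pos
  simp only [Nat.add_sub_cancel] at h
  have h' : α + α₁ * (a n - a (n + 2) + b (n + 1) - b n)
      + α₂ * (1 / b (n + 1) - 1 / b n) = 0 :=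
    mul_left_cancel₀ (ha (n + 1)) (by linear_combination h)
  unfold firstIntegralA
  push_cast
  linear_combination h'

theorem firstIntegralB_succ (hb : ∀ n, b n ≠ 0)
    (h2 : ∀ n : ℕ, 1 ≤ n →
      α * b n + α₁ * b n * (a n - a (n + 1))
        + α₂ * (a (n + 1) / b (n + 1) - a n / b (n - 1)) = 0)
    (n : ℕ) : firstIntegralB α α₁ α₂ a b (n + 1) = firstIntegralB α α₁ α₂ a b n := by
  have h := h2 (n + 1) n.succ_pos
  simp only [Nat.add_sub_cancel] at h
  have := hb n
  have := hb (n + 1)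
  have := hb (n + 2)
  unfold firstIntegralB
  push_cast
  field_simp at h ⊢
  linear_combination -h

end StationaryRToda

open StationaryRToda in
theorem stationary_rToda_alt_dPII
    (α α₁ α₂ : ℝ)
    (a b : ℕ → ℝ) (ha : ∀ n, a n ≠ 0) (hb : ∀ n, b n ≠ 0)
    (h1 : ∀ n : ℕ, 1 ≤ n →
      α * a n + α₁ * a n * (a (n - 1) - a (n + 1) + b n - b (n - 1))
        + α₂ * a n * (1 / b n - 1 / b (n - 1)) = 0)
    (h2 : ∀ n : ℕ, 1 ≤ n →
      α * b n + α₁ * b n * (a n - a (n + 1))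
        + α₂ * (a (n + 1) / b (n + 1) - a n / b (n - 1)) = 0) :
    ∃ A₀ B₀ : ℝ,
      (∀ n : ℕ,
        α₁ * (b n - a (n + 1) - a n) + α₂ / b n + (n : ℝ) * α + A₀ = 0 ∧
        α₁ * a (n + 1) - α₂ * a (n + 1) / (b n * b (n + 1)) - (n : ℝ) * α - B₀ = 0) ∧
      ((∀ n : ℕ, α₁ * b n * b (n + 1) - α₂ ≠ 0) →
        (∀ n : ℕ, a (n + 1) =
          ((n : ℝ) * α + B₀) * b n * b (n + 1) / (α₁ * b n * b (n + 1) - α₂)) ∧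
        (∀ n : ℕ, 1 ≤ n →
          α₁ * (b n
              - ((n : ℝ) * α + B₀) * b n * b (n + 1) / (α₁ * b n * b (n + 1) - α₂)
              - (((n : ℝ) - 1) * α + B₀) * b (n - 1) * b n /
                  (α₁ * b (n - 1) * b n - α₂))
            + α₂ / b n + (n : ℝ) * α + A₀ = 0)) := by
  have hA := eq_apply_zero_of_apply_succ_eq (firstIntegralA_succ ha h1)
  have hB := eq_apply_zero_of_apply_succ_eq (firstIntegralB_succ hb h2)
  have integrals (n : ℕ) :
      α₁ * (b n - a (n + 1) - a n) + α₂ / b n + (n : ℝ) * α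
          - firstIntegralA α α₁ α₂ a b 0 = 0 ∧
        α₁ * a (n + 1) - α₂ * a (n + 1) / (b n * b (n + 1)) - (n : ℝ) * α
          - firstIntegralB α α₁ α₂ a b 0 = 0 :=
    ⟨sub_eq_zero.2 (hA n), sub_eq_zero.2 (hB n)⟩
  refine ⟨-firstIntegralA α α₁ α₂ a b 0, firstIntegralB α α₁ α₂ a b 0,
    fun n => by simpa only [← sub_eq_add_neg] using integrals n, fun hden => ?_⟩
  have ha_succ (n : ℕ) : a (n + 1) = ((n : ℝ) * α + firstIntegralB α α₁ α₂ a b 0)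
      * b n * b (n + 1) / (α₁ * b n * b (n + 1) - α₂) := by
    rw [mul_assoc _ (b n), mul_assoc α₁]
    refine eq_div_of_mul_sub_div_eq (mul_ne_zero (hb n) (hb (n + 1)))
      (by simpa only [mul_assoc] using hden n) ?_
    linear_combination (integrals n).2
  refine ⟨ha_succ, fun n hn => ?_⟩
  obtain ⟨m, rfl⟩ : ∃ m, n = m + 1 := ⟨n - 1, by omega⟩
  simp only [Nat.add_sub_cancel]
  have hm := (integrals (m + 1)).1
  rw [ha_succ (m + 1), ha_succ m] at hm
  push_cast at hm ⊢
  linear_combination hm
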